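/- arXiv:1601.06093 — 5 statements merged into one kernel-verified Lean document; each statement's English description precedes it below -/
import Mathlib

section
/- Fix Λ > 0, σ ∈ (0, π/2), a code a = (a_k) with a_k ∈ πℤ and |a_{k-1}-2a_k+a_{k+1}| ≤ Λ, and |λ| ≥ max((Λ+4σ)/sin σ, 8/cos σ). Define Φ on the closed ball B = {x : sup_k |x_k - a_k| ≤ σ} (in the sup metric on bounded sequences) by (Φx)_k = arcsin_k((x_{k+1} - 2x_k + x_{k-1})/λ), where arcsin_k is the branch of sin^{-1} with arcsin_k(0) = a_k. Then Φ maps B into B and is a contraction with Lipschitz constant at most 1/2. -/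
open Real

/-- The anti-integrable-limit operator `Φ` for the standard map maps the closed
`σ`-ball around the code `a` (in the sup metric) into itself and is a `1/2`-contraction. -/
theorem standard_map_AI_operator_contraction
    (Λ σ lam : ℝ) (hΛ : 0 < Λ) (hσ : 0 < σ) (hσ' : σ < π / 2)
    (m : ℤ → ℤ) (a : ℤ → ℝ) (ham : ∀ k : ℤ, a k = π * m k)
    (haΛ : ∀ k : ℤ, |a (k - 1) - 2 * a k + a (k + 1)| ≤ Λ)
    (hlam : |lam| ≥ max ((Λ + 4 * σ) / Real.sin σ) (8 / Real.cos σ))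
    (Φ : (ℤ → ℝ) → ℤ → ℝ)
    (hΦ : ∀ x : ℤ → ℝ, ∀ k : ℤ,
      Φ x k = a k + (if Even (m k) then (1 : ℝ) else -1) *
        Real.arcsin ((x (k + 1) - 2 * x k + x (k - 1)) / lam)) :
    (∀ x : ℤ → ℝ, (∀ k, |x k - a k| ≤ σ) → ∀ k, |Φ x k - a k| ≤ σ) ∧
    (∀ x x' : ℤ → ℝ, (∀ k, |x k - a k| ≤ σ) → (∀ k, |x' k - a k| ≤ σ) →
      ∀ b : ℝ, (∀ k, |x k - x' k| ≤ b) → ∀ k, |Φ x k - Φ x' k| ≤ (1 / 2) * b) := by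
  have hpi := Real.pi_pos
  have hsin : 0 < Real.sin σ := Real.sin_pos_of_pos_of_lt_pi hσ (by linarith)
  have hcos : 0 < Real.cos σ := Real.cos_pos_of_mem_Ioo ⟨by linarith, hσ'⟩
  have hsin1 : Real.sin σ < 1 := by
    have := Real.strictMonoOn_sin (a := σ) (b := π / 2)
      ⟨le_of_lt (by linarith), le_of_lt hσ'⟩ ⟨by linarith, le_refl _⟩ hσ'
    simpa using this
  have hlam1 : (Λ + 4 * σ) / Real.sin σ ≤ |lam| := le_trans (le_max_left _ _) hlam
  have hlam2 : 8 / Real.cos σ ≤ |lam| := le_trans (le_max_right _ _) hlam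
  have hlampos : 0 < |lam| := lt_of_lt_of_le (by positivity) hlam2
  have hlamne : lam ≠ 0 := by
    intro h; rw [h, abs_zero] at hlampos; exact lt_irrefl _ hlampos
  have hA : Λ + 4 * σ ≤ Real.sin σ * |lam| := by
    rw [div_le_iff₀ hsin] at hlam1; linarith [hlam1]
  have hB : 8 ≤ Real.cos σ * |lam| := by
    rw [div_le_iff₀ hcos] at hlam2; linarith [hlam2]
  -- bound on the discrete Laplacian over the ball
  have hD : ∀ x : ℤ → ℝ, (∀ k, |x k - a k| ≤ σ) → ∀ k : ℤ,
      |(x (k + 1) - 2 * x k + x (k - 1)) / lam| ≤ Real.sin σ := by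
    intro x hx k
    have h1 := abs_le.mp (hx (k + 1))
    have h2 := abs_le.mp (hx k)
    have h3 := abs_le.mp (hx (k - 1))
    have h4 := abs_le.mp (haΛ k)
    have hDabs : |x (k + 1) - 2 * x k + x (k - 1)| ≤ Λ + 4 * σ := by
      rw [abs_le]; constructor <;> [linarith; linarith]
    rw [abs_div, div_le_iff₀ hlampos]
    calc |x (k + 1) - 2 * x k + x (k - 1)| ≤ Λ + 4 * σ := hDabs
      _ ≤ Real.sin σ * |lam| := hA
  -- Lipschitz estimate for arcsin on [-sin σ, sin σ]
  have key : ∀ u v : ℝ, |u| ≤ Real.sin σ → |v| ≤ Real.sin σ →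
      |Real.arcsin u - Real.arcsin v| ≤ (1 / Real.cos σ) * |u - v| := by
    intro u v hu hv
    set s : Set ℝ := Set.Icc (-Real.sin σ) (Real.sin σ)
    have hderiv : ∀ w ∈ s, HasDerivWithinAt Real.arcsin (1 / Real.sqrt (1 - w ^ 2)) s w := by
      intro w hw
      have hw1 : |w| ≤ Real.sin σ := abs_le.mpr ⟨hw.1, hw.2⟩
      have hlt : |w| < 1 := lt_of_le_of_lt hw1 hsin1
      have h1 : w ≠ -1 := by intro h; rw [h] at hlt; simp at hlt
      have h2 : w ≠ 1 := by intro h; rw [h] at hlt; simp at hlt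
      exact (Real.hasDerivAt_arcsin h1 h2).hasDerivWithinAt
    have hbound : ∀ w ∈ s, ‖1 / Real.sqrt (1 - w ^ 2)‖ ≤ 1 / Real.cos σ := by
      intro w hw
      have hw1 : |w| ≤ Real.sin σ := abs_le.mpr ⟨hw.1, hw.2⟩
      have hw2 : w ^ 2 ≤ Real.sin σ ^ 2 := by
        have := sq_abs w
        nlinarith [abs_nonneg w, Real.sin_nonneg_of_nonneg_of_le_pi (le_of_lt hσ) (by linarith)]
      have hcos2 : Real.cos σ ^ 2 ≤ 1 - w ^ 2 := by
        have := Real.sin_sq_add_cos_sq σ; nlinarith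
      have hsq : Real.cos σ ≤ Real.sqrt (1 - w ^ 2) := by
        have := Real.sqrt_le_sqrt hcos2
        rwa [Real.sqrt_sq (le_of_lt hcos)] at this
      have hpos : 0 < Real.sqrt (1 - w ^ 2) := lt_of_lt_of_le hcos hsq
      rw [Real.norm_eq_abs, abs_of_nonneg (by positivity)]
      exact one_div_le_one_div_of_le hcos hsq
    have hconv : Convex ℝ s := convex_Icc _ _
    have hus : u ∈ s := ⟨(abs_le.mp hu).1, (abs_le.mp hu).2⟩
    have hvs : v ∈ s := ⟨(abs_le.mp hv).1, (abs_le.mp hv).2⟩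
    have := hconv.norm_image_sub_le_of_norm_hasDerivWithin_le hderiv hbound hvs hus
    simpa [Real.norm_eq_abs] using this
  constructor
  · intro x hx k
    have hu := hD x hx k
    set u := (x (k + 1) - 2 * x k + x (k - 1)) / lam
    have harc : |Real.arcsin u| ≤ σ := by
      rw [abs_le]
      constructor
      · have h : Real.arcsin (-Real.sin σ) ≤ Real.arcsin u :=
          Real.monotone_arcsin (by linarith [(abs_le.mp hu).1])
        rw [Real.arcsin_neg, Real.arcsin_sin (by linarith) (by linarith)] at h
        linarith
      · have : Real.arcsin u ≤ Real.arcsin (Real.sin σ) :=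
          Real.monotone_arcsin ((abs_le.mp hu).2)
        rwa [Real.arcsin_sin (by linarith) (by linarith)] at this
    rw [hΦ x k]
    have : |a k + (if Even (m k) then (1:ℝ) else -1) * Real.arcsin u - a k|
        = |Real.arcsin u| := by
      split_ifs <;> simp [abs_neg]
    calc |a k + (if Even (m k) then (1:ℝ) else -1) * Real.arcsin u - a k|
        = |Real.arcsin u| := this
      _ ≤ σ := harc
  · intro x x' hx hx' b hb k
    have hbnonneg : 0 ≤ b := le_trans (abs_nonneg _) (hb 0)
    have hu := hD x hx k
    have hv := hD x' hx' k
    set u := (x (k + 1) - 2 * x k + x (k - 1)) / lam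
    set v := (x' (k + 1) - 2 * x' k + x' (k - 1)) / lam
    have huv : |u - v| ≤ 4 * b / |lam| := by
      have h1 := abs_le.mp (hb (k + 1))
      have h2 := abs_le.mp (hb k)
      have h3 := abs_le.mp (hb (k - 1))
      have hnum : |x (k + 1) - 2 * x k + x (k - 1) - (x' (k + 1) - 2 * x' k + x' (k - 1))|
          ≤ 4 * b := by
        rw [abs_le]; constructor <;> [linarith; linarith]
      have : u - v = (x (k + 1) - 2 * x k + x (k - 1)
          - (x' (k + 1) - 2 * x' k + x' (k - 1))) / lam := by
        simp only [u, v]; ring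
      rw [this, abs_div]
      gcongr
    have harc := key u v hu hv
    rw [hΦ x k, hΦ x' k]
    have heq : |a k + (if Even (m k) then (1:ℝ) else -1) * Real.arcsin u -
        (a k + (if Even (m k) then (1:ℝ) else -1) * Real.arcsin v)|
        = |Real.arcsin u - Real.arcsin v| := by
      split_ifs <;> [simp; (rw [show a k + -1 * Real.arcsin u - (a k + -1 * Real.arcsin v)
        = -(Real.arcsin u - Real.arcsin v) by ring, abs_neg])]
    rw [heq]
    calc |Real.arcsin u - Real.arcsin v| ≤ (1 / Real.cos σ) * |u - v| := harc
      _ ≤ (1 / Real.cos σ) * (4 * b / |lam|) := by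
          exact mul_le_mul_of_nonneg_left huv (by positivity)
      _ ≤ (1 / 2) * b := by
          have hpos : (0:ℝ) < Real.cos σ * |lam| := by positivity
          have heq2 : 1 / Real.cos σ * (4 * b / |lam|) = 4 * b / (Real.cos σ * |lam|) := by
            field_simp
          rw [heq2, div_le_iff₀ hpos]
          nlinarith [hB, hbnonneg]
end

section
/- Let f be the standard map in Lagrangian coordinates, f(x_-, x) = (x, x_+) with x_+ = -x_- + 2x + λ sin x, so Df(x_-,x) = [[0,1],[-1, 2 + λ cos x]]. Fix σ ∈ (0, π/2) and suppose λ cos σ > 9/2. Then for any point q = (x_-, x) with |x mod π| ≤ σ (i.e. cos x has absolute value at least cos σ) and any tangent vector (u_-, u) with |u_-| ≤ (1/2)|u|, the image vector (u, u_+) = Df(q)(u_-, u) satisfies |u| ≤ (1/2)|u_+| and ‖(u, u_+)‖ ≥ 2‖(u_-, u)‖ in the Euclidean norm. -/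
open Real

/-- Cone-field invariance and expansion for the standard map in Lagrangian
coordinates: vectors in the horizontal cone `|u₋| ≤ |u|/2` are mapped into the
horizontal cone and expanded by a factor at least `2`, provided `dist(x, πℤ) ≤ σ`
and `λ cos σ > 9/2`. -/
theorem standard_map_cone_criterion
    (σ lam : ℝ) (hσ : 0 < σ) (hσ' : σ < π / 2)
    (hlam : lam * Real.cos σ > 9 / 2)
    (x xm u um : ℝ)
    (hx : ∃ m : ℤ, |x - π * m| ≤ σ)
    (hcone : |um| ≤ (1 / 2) * |u|)
    (up : ℝ) (hup : up = -um + (2 + lam * Real.cos x) * u) :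
    |u| ≤ (1 / 2) * |up| ∧
    Real.sqrt (u ^ 2 + up ^ 2) ≥ 2 * Real.sqrt (um ^ 2 + u ^ 2) := by
  obtain ⟨m, hm⟩ := hx
  have hcosσ : 0 < Real.cos σ := Real.cos_pos_of_mem_Ioo ⟨by linarith [pi_pos], hσ'⟩
  have hlam0 : 0 < lam := by
    nlinarith [hcosσ]
  -- |cos x| ≥ cos σ
  have hcos1 : Real.cos (x - π * m) ≥ Real.cos σ := by
    rw [← Real.cos_abs]
    apply Real.cos_le_cos_of_nonneg_of_le_pi (abs_nonneg _) _ hm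
    linarith [pi_pos]
  have habs : |Real.cos (x - π * m)| = |Real.cos x| := by
    have hs : Real.sin (π * m) = 0 := by
      rw [mul_comm]; exact Real.sin_int_mul_pi m
    have hc : |Real.cos (π * m)| = 1 := by
      rw [mul_comm]; exact Real.abs_cos_int_mul_pi m
    rw [Real.cos_sub, hs, mul_zero, add_zero, abs_mul, hc, mul_one]
  have hcosx : |Real.cos x| ≥ Real.cos σ := by
    rw [← habs]
    calc Real.cos σ ≤ Real.cos (x - π * m) := hcos1
    _ ≤ |Real.cos (x - π * m)| := le_abs_self _
  -- |lam * cos x| > 9/2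
  have h1 : |lam * Real.cos x| > 9 / 2 := by
    rw [abs_mul, abs_of_pos hlam0]
    calc 9/2 < lam * Real.cos σ := hlam
    _ ≤ lam * |Real.cos x| := by nlinarith
  have h2 : |2 + lam * Real.cos x| ≥ 5 / 2 := by
    cases abs_cases (lam * Real.cos x) with
    | inl h => cases abs_cases (2 + lam * Real.cos x) with
      | inl h' => linarith [h.1, h'.1]
      | inr h' => linarith [h.1, h'.1]
    | inr h => cases abs_cases (2 + lam * Real.cos x) with
      | inl h' => linarith [h.1, h'.1]
      | inr h' => linarith [h.1, h'.1]
  -- |up| ≥ 2|u|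
  have hup2 : |up| ≥ 2 * |u| := by
    have : |(2 + lam * Real.cos x) * u| - |um| ≤ |up| := by
      rw [hup]
      have := abs_sub_abs_le_abs_sub ((2 + lam * Real.cos x) * u) um
      have heq : (2 + lam * Real.cos x) * u - um = -um + (2 + lam * Real.cos x) * u := by ring
      rw [heq] at this
      linarith
    rw [abs_mul] at this
    nlinarith [abs_nonneg u]
  constructor
  · nlinarith [abs_nonneg u]
  · have key : 4 * (um ^ 2 + u ^ 2) ≤ u ^ 2 + up ^ 2 := by
      have h3 : um ^ 2 ≤ (1/2 * |u|) ^ 2 := by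
        rw [← sq_abs um]; exact pow_le_pow_left₀ (abs_nonneg _) hcone 2
      have h4 : (2 * |u|) ^ 2 ≤ up ^ 2 := by
        rw [← sq_abs up]
        exact pow_le_pow_left₀ (by positivity) hup2 2
      rw [← sq_abs u] at *
      nlinarith
    calc 2 * Real.sqrt (um ^ 2 + u ^ 2) = Real.sqrt (4 * (um ^ 2 + u ^ 2)) := by
          rw [Real.sqrt_mul (by norm_num), show (4:ℝ) = 2^2 by norm_num,
            Real.sqrt_sq (by norm_num : (0:ℝ) ≤ 2)]
      _ ≤ Real.sqrt (u ^ 2 + up ^ 2) := Real.sqrt_le_sqrt key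
end

section
/- Let (X, ρ) be a complete metric space of sequences x = (x_i)_{i∈ℤ} with x_i in closed balls W_i = {x ∈ ℝ^m : |x - a_i| ≤ r} and ρ(x,x') = sup_i |x_i - x'_i|. Suppose Φ : X → X is of the form (Φx)_i = φ_i(∂_{x_i}(u_{i-1}(x_{i-1},x_i) + u_i(x_i,x_{i+1}))), where each φ_i is λ-Lipschitz with φ_i(0) = a_i, and each u_i is C² with ‖u_i‖_{C²} ≤ ε. If 2λε < r and 2λε < 1, then Φ maps the ball B = {x : ρ(x,a) ≤ 2λε} into itself and is a contraction on B with constant 2λε; consequently Φ has a unique fixed point x* with ρ(x*, a) ≤ 2λε. -/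
/-!
Write `G(x)_i = ∂₂u_{i-1}(x_{i-1}, x_i) + ∂₁u_i(x_i, x_{i+1})`, so that `(Φx)_i = φ_i(G(x)_i)`.
A partial gradient of `u` is a restriction of `Du`, so `|G(x)_i| ≤ 2ε`; and since `‖D²u‖ ≤ ε`,
the mean value inequality makes `G` a `2ε`-Lipschitz map for the sup metric. Composing with the
`λ`-Lipschitz maps `φ_i`, which send `0` to `a_i`, gives the self-map and contraction estimates.
Sequences with the sup metric form the complete extended metric space `ℤ →ᵤ ℝᵐ`, in which the
ball around `a` is closed and has finite diameter, so the Banach fixed point theorem applies.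
-/

open Metric Set UniformFun
open scoped UniformConvergence

section PartialGradient

variable {E F : Type*} [NormedAddCommGroup E] [NormedAddCommGroup F]

section Inclusions

variable {𝕜 G : Type*} [NontriviallyNormedField 𝕜] [NormedSpace 𝕜 E] [NormedSpace 𝕜 F]
  [NormedAddCommGroup G] [NormedSpace 𝕜 G]

lemma ContinuousLinearMap.norm_comp_inl_le (L : E × F →L[𝕜] G) : ‖L.comp (inl 𝕜 E F)‖ ≤ ‖L‖ :=
  (opNorm_comp_le _ _).trans (mul_le_of_le_one_right (norm_nonneg _) (norm_inl_le_one 𝕜 E F))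

lemma ContinuousLinearMap.norm_comp_inr_le (L : E × F →L[𝕜] G) : ‖L.comp (inr 𝕜 E F)‖ ≤ ‖L‖ :=
  (opNorm_comp_le _ _).trans (mul_le_of_le_one_right (norm_nonneg _) (norm_inr_le_one 𝕜 E F))

end Inclusions

section Right

variable [NormedSpace ℝ E] [InnerProductSpace ℝ F] [CompleteSpace F] {f : E × F → ℝ}

lemma gradient_comp_prodMk_right {p : E} {q : F} (hf : DifferentiableAt ℝ f (p, q)) :
    gradient (fun z => f (p, z)) q =
      (InnerProductSpace.toDual ℝ F).symm ((fderiv ℝ f (p, q)).comp (.inr ℝ E F)) :=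
  congrArg _ (hf.hasFDerivAt.comp q (hasFDerivAt_prodMk_right p q)).fderiv

lemma norm_gradient_comp_prodMk_right_le {p : E} {q : F} (hf : DifferentiableAt ℝ f (p, q)) :
    ‖gradient (fun z => f (p, z)) q‖ ≤ ‖fderiv ℝ f (p, q)‖ := by
  rw [gradient_comp_prodMk_right hf, LinearIsometryEquiv.norm_map]
  exact ContinuousLinearMap.norm_comp_inr_le _

lemma norm_gradient_comp_prodMk_right_sub_le {p p' : E} {q q' : F}
    (hf : DifferentiableAt ℝ f (p, q)) (hf' : DifferentiableAt ℝ f (p', q')) :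
    ‖gradient (fun z => f (p, z)) q - gradient (fun z => f (p', z)) q'‖ ≤
      ‖fderiv ℝ f (p, q) - fderiv ℝ f (p', q')‖ := by
  rw [gradient_comp_prodMk_right hf, gradient_comp_prodMk_right hf', ← map_sub,
    LinearIsometryEquiv.norm_map, ← ContinuousLinearMap.sub_comp]
  exact ContinuousLinearMap.norm_comp_inr_le _

end Right

section Left

variable [InnerProductSpace ℝ E] [CompleteSpace E] [NormedSpace ℝ F] {f : E × F → ℝ}

lemma gradient_comp_prodMk_left {p : E} {q : F} (hf : DifferentiableAt ℝ f (p, q)) :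
    gradient (fun z => f (z, q)) p =
      (InnerProductSpace.toDual ℝ E).symm ((fderiv ℝ f (p, q)).comp (.inl ℝ E F)) :=
  congrArg _ (hf.hasFDerivAt.comp p (hasFDerivAt_prodMk_left p q)).fderiv

lemma norm_gradient_comp_prodMk_left_le {p : E} {q : F} (hf : DifferentiableAt ℝ f (p, q)) :
    ‖gradient (fun z => f (z, q)) p‖ ≤ ‖fderiv ℝ f (p, q)‖ := by
  rw [gradient_comp_prodMk_left hf, LinearIsometryEquiv.norm_map]
  exact ContinuousLinearMap.norm_comp_inl_le _

lemma norm_gradient_comp_prodMk_left_sub_le {p p' : E} {q q' : F}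
    (hf : DifferentiableAt ℝ f (p, q)) (hf' : DifferentiableAt ℝ f (p', q')) :
    ‖gradient (fun z => f (z, q)) p - gradient (fun z => f (z, q')) p'‖ ≤
      ‖fderiv ℝ f (p, q) - fderiv ℝ f (p', q')‖ := by
  rw [gradient_comp_prodMk_left hf, gradient_comp_prodMk_left hf', ← map_sub,
    LinearIsometryEquiv.norm_map, ← ContinuousLinearMap.sub_comp]
  exact ContinuousLinearMap.norm_comp_inl_le _

end Left

end PartialGradient

lemma norm_fderiv_sub_le_of_norm_fderiv_fderiv_le {E F : Type*} [NormedAddCommGroup E]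
    [NormedSpace ℝ E] [NormedAddCommGroup F] [NormedSpace ℝ F] {f : E → F} {C : ℝ}
    (hf : ContDiff ℝ 2 f) (hD2f : ∀ z, ‖fderiv ℝ (fderiv ℝ f) z‖ ≤ C) (z w : E) :
    ‖fderiv ℝ f z - fderiv ℝ f w‖ ≤ C * ‖z - w‖ :=
  have hD2 : Differentiable ℝ (fderiv ℝ f) :=
    (hf.fderiv_right (by norm_num)).differentiable one_ne_zero
  convex_univ.norm_image_sub_le_of_norm_fderiv_le (fun z _ => hD2 z) (fun z _ => hD2f z)
    (mem_univ w) (mem_univ z)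

section CouplingGradient

variable {E : Type*} [NormedAddCommGroup E] [InnerProductSpace ℝ E] [CompleteSpace E]

noncomputable def couplingGradient (u : ℤ → E × E → ℝ) (x : ℤ → E) (i : ℤ) : E :=
  gradient (fun z => u (i - 1) (x (i - 1), z)) (x i) +
    gradient (fun z => u i (z, x (i + 1))) (x i)

variable {u : ℤ → E × E → ℝ} {ε : ℝ}

lemma norm_couplingGradient_le (hu : ∀ i, Differentiable ℝ (u i))
    (hDu : ∀ i z, ‖fderiv ℝ (u i) z‖ ≤ ε) (x : ℤ → E) (i : ℤ) :
    ‖couplingGradient u x i‖ ≤ 2 * ε :=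
  calc ‖couplingGradient u x i‖ ≤ ε + ε :=
        norm_add_le_of_le
          ((norm_gradient_comp_prodMk_right_le (hu _ _)).trans (hDu _ _))
          ((norm_gradient_comp_prodMk_left_le (hu _ _)).trans (hDu _ _))
    _ = 2 * ε := by ring

lemma norm_couplingGradient_sub_le (hε : 0 ≤ ε) (hu : ∀ i, Differentiable ℝ (u i))
    (hDu : ∀ i z w, ‖fderiv ℝ (u i) z - fderiv ℝ (u i) w‖ ≤ ε * ‖z - w‖) {x x' : ℤ → E}
    {b : ℝ} (hb : ∀ i, ‖x i - x' i‖ ≤ b) (i : ℤ) :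
    ‖couplingGradient u x i - couplingGradient u x' i‖ ≤ 2 * ε * b := by
  have hDu_sub : ∀ i j k, ‖fderiv ℝ (u i) (x j, x k) - fderiv ℝ (u i) (x' j, x' k)‖ ≤ ε * b :=
    fun i j k => (hDu _ _ _).trans
      (mul_le_mul_of_nonneg_left (norm_prod_le_iff.2 ⟨hb j, hb k⟩) hε)
  calc ‖couplingGradient u x i - couplingGradient u x' i‖
      = ‖(gradient (fun z => u (i - 1) (x (i - 1), z)) (x i) -
            gradient (fun z => u (i - 1) (x' (i - 1), z)) (x' i)) +
          (gradient (fun z => u i (z, x (i + 1))) (x i) -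
            gradient (fun z => u i (z, x' (i + 1))) (x' i))‖ := by
        rw [couplingGradient, couplingGradient, add_sub_add_comm]
    _ ≤ ε * b + ε * b :=
        norm_add_le_of_le
          ((norm_gradient_comp_prodMk_right_sub_le (hu _ _) (hu _ _)).trans (hDu_sub _ _ _))
          ((norm_gradient_comp_prodMk_left_sub_le (hu _ _) (hu _ _)).trans (hDu_sub _ _ _))
    _ = 2 * ε * b := by ring

end CouplingGradient

theorem ContractingWith.existsUnique_isFixedPt_of_mapsTo {α : Type*} [EMetricSpace α]
    {K : NNReal} {f : α → α} {s : Set α} (hsc : IsComplete s) (hs : s.Nonempty)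
    (hdiam : ediam s ≠ ⊤) (hsf : MapsTo f s s) (hf : ContractingWith K (hsf.restrict f s s)) :
    ∃! x, x ∈ s ∧ Function.IsFixedPt f x := by
  have hfin : ∀ {x y}, x ∈ s → y ∈ s → edist x y ≠ ⊤ :=
    fun hx hy => ne_top_of_le_ne_top hdiam (edist_le_ediam_of_mem hx hy)
  obtain ⟨x, hx⟩ := hs
  obtain ⟨y, hys, hfy, -⟩ := hf.exists_fixedPoint' hsc hsf hx (hfin hx (hsf hx))
  refine ⟨y, ⟨hys, hfy⟩, fun z ⟨hzs, hfz⟩ => ?_⟩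
  rcases hf.eq_or_edist_eq_top_of_fixedPoints (x := ⟨z, hzs⟩) (y := ⟨y, hys⟩)
    (Subtype.ext hfz) (Subtype.ext hfy) with h | h
  · exact congrArg Subtype.val h
  · exact absurd h (hfin hzs hys)

section SupMetric

variable {ι X : Type*} [MetricSpace X]

lemma UniformFun.ofFun_mem_closedEBall_iff {a x : ι → X} {R : ℝ} (hR : 0 ≤ R) :
    ofFun x ∈ closedEBall (ofFun a) (ENNReal.ofReal R) ↔ ∀ i, dist (x i) (a i) ≤ R := by
  simp only [mem_closedEBall, UniformFun.edist_le, edist_le_ofReal hR]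
  rfl

theorem existsUnique_fixedPoint_of_sup_contraction [CompleteSpace X] (a : ι → X) {R K : ℝ}
    (hR : 0 ≤ R) (hK0 : 0 ≤ K) (hK1 : K < 1) (Φ : (ι → X) → ι → X)
    (hmaps : ∀ x, (∀ i, dist (x i) (a i) ≤ R) → ∀ i, dist (Φ x i) (a i) ≤ R)
    (hcontr : ∀ x y, (∀ i, dist (x i) (a i) ≤ R) → (∀ i, dist (y i) (a i) ≤ R) →
      ∀ b, 0 ≤ b → (∀ i, dist (x i) (y i) ≤ b) → ∀ i, dist (Φ x i) (Φ y i) ≤ K * b) :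
    ∃! x, (∀ i, dist (x i) (a i) ≤ R) ∧ Φ x = x := by
  set s := closedEBall (ofFun a) (ENNReal.ofReal R)
  have hmem : ∀ x, ofFun x ∈ s ↔ ∀ i, dist (x i) (a i) ≤ R :=
    fun _ => ofFun_mem_closedEBall_iff hR
  have hdiam : ediam s ≠ ⊤ := ne_top_of_le_ne_top (by finiteness) ediam_closedEBall_le
  let F : (ι →ᵤ X) → (ι →ᵤ X) := fun x => ofFun (Φ (toFun x))
  have hsF : MapsTo F s s := fun x hx => (hmem _).2 (hmaps _ ((hmem _).1 hx))
  have hF : ContractingWith K.toNNReal (hsF.restrict F s s) := by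
    refine ⟨Real.toNNReal_lt_one.2 hK1, fun ⟨x, hx⟩ ⟨y, hy⟩ => ?_⟩
    have hxy : edist x y ≠ ⊤ := ne_top_of_le_ne_top hdiam (edist_le_ediam_of_mem hx hy)
    have hb : ∀ i, dist (toFun x i) (toFun y i) ≤ (edist x y).toReal := fun i =>
      (edist_le_ofReal ENNReal.toReal_nonneg).1
        ((ENNReal.ofReal_toReal hxy).symm ▸ UniformFun.edist_eval_le)
    refine UniformFun.edist_le.2 fun i => ?_
    calc edist (F x i) (F y i) ≤ ENNReal.ofReal (K * (edist x y).toReal) :=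
          (edist_le_ofReal (by positivity)).2
            (hcontr _ _ ((hmem _).1 hx) ((hmem _).1 hy) _ ENNReal.toReal_nonneg hb i)
      _ = K.toNNReal * edist x y := by rw [ENNReal.ofReal_mul hK0, ENNReal.ofReal_toReal hxy]; rfl
  have hne : s.Nonempty := ⟨ofFun a, (hmem a).2 fun i => (dist_self (a i)).trans_le hR⟩
  refine (ofFun.existsUnique_congr fun {x} => ?_).2
    (hF.existsUnique_isFixedPt_of_mapsTo isClosed_closedEBall.isComplete hne hdiam hsF)
  rw [hmem, Function.IsFixedPt, ofFun.apply_eq_iff_eq]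
  rfl

end SupMetric

theorem anti_integrable_contraction_general
    (m : ℕ) (a : ℤ → EuclideanSpace ℝ (Fin m))
    (ε lam : ℝ) (hε : 0 ≤ ε) (hlam : 0 < lam)
    (φ : ℤ → EuclideanSpace ℝ (Fin m) → EuclideanSpace ℝ (Fin m))
    (hφlip : ∀ i, LipschitzWith (Real.toNNReal lam) (φ i))
    (hφ0 : ∀ i, φ i 0 = a i)
    (u : ℤ → EuclideanSpace ℝ (Fin m) × EuclideanSpace ℝ (Fin m) → ℝ)
    (hu : ∀ i, ContDiff ℝ 2 (u i))
    (huC2 : ∀ i z, |u i z| ≤ ε ∧ ‖fderiv ℝ (u i) z‖ ≤ ε ∧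
      ‖fderiv ℝ (fderiv ℝ (u i)) z‖ ≤ ε)
    (Φ : (ℤ → EuclideanSpace ℝ (Fin m)) → ℤ → EuclideanSpace ℝ (Fin m))
    (hΦ : ∀ x i, Φ x i = φ i
      (gradient (fun z => u (i - 1) (x (i - 1), z)) (x i) +
       gradient (fun z => u i (z, x (i + 1))) (x i)))
    (hsmall2 : 2 * lam * ε < 1) :
    (∀ x, (∀ i, ‖x i - a i‖ ≤ 2 * lam * ε) → ∀ i, ‖Φ x i - a i‖ ≤ 2 * lam * ε) ∧
    (∀ x x', (∀ i, ‖x i - a i‖ ≤ 2 * lam * ε) → (∀ i, ‖x' i - a i‖ ≤ 2 * lam * ε) →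
      ∀ b : ℝ, 0 ≤ b → (∀ i, ‖x i - x' i‖ ≤ b) →
        ∀ i, ‖Φ x i - Φ x' i‖ ≤ (2 * lam * ε) * b) ∧
    (∃! xs : ℤ → EuclideanSpace ℝ (Fin m),
      (∀ i, ‖xs i - a i‖ ≤ 2 * lam * ε) ∧ ∀ i, Φ xs i = xs i) := by
  have hdiff : ∀ i, Differentiable ℝ (u i) := fun i => (hu i).differentiable two_ne_zero
  have hφ : ∀ i y z, ‖φ i y - φ i z‖ ≤ lam * ‖y - z‖ := fun i y z => by
    simpa only [dist_eq_norm, Real.coe_toNNReal _ hlam.le] using (hφlip i).dist_le_mul y z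
  have hΦG : ∀ x i, Φ x i = φ i (couplingGradient u x i) := hΦ
  have hselfmap : ∀ x, (∀ i, ‖x i - a i‖ ≤ 2 * lam * ε) → ∀ i, ‖Φ x i - a i‖ ≤ 2 * lam * ε :=
    fun x _ i => calc
      ‖Φ x i - a i‖ = ‖φ i (couplingGradient u x i) - φ i 0‖ := by rw [hΦG, hφ0]
      _ ≤ lam * ‖couplingGradient u x i - 0‖ := hφ i _ _
      _ ≤ lam * (2 * ε) := by
        rw [sub_zero]
        gcongr
        exact norm_couplingGradient_le hdiff (fun i z => (huC2 i z).2.1) x i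
      _ = 2 * lam * ε := by ring
  have hcontr : ∀ x x', (∀ i, ‖x i - a i‖ ≤ 2 * lam * ε) → (∀ i, ‖x' i - a i‖ ≤ 2 * lam * ε) →
      ∀ b : ℝ, 0 ≤ b → (∀ i, ‖x i - x' i‖ ≤ b) →
        ∀ i, ‖Φ x i - Φ x' i‖ ≤ (2 * lam * ε) * b := fun x x' _ _ b _ hb i => calc
      ‖Φ x i - Φ x' i‖ ≤ lam * ‖couplingGradient u x i - couplingGradient u x' i‖ := by
        rw [hΦG, hΦG]
        exact hφ i _ _
      _ ≤ lam * (2 * ε * b) := by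
        gcongr
        exact norm_couplingGradient_sub_le hε hdiff
          (fun i => norm_fderiv_sub_le_of_norm_fderiv_fderiv_le (hu i) fun z => (huC2 i z).2.2) hb i
      _ = (2 * lam * ε) * b := by ring
  refine ⟨hselfmap, hcontr, ?_⟩
  simpa only [← dist_eq_norm, funext_iff] using
    existsUnique_fixedPoint_of_sup_contraction a (by positivity) (by positivity) hsmall2 Φ
      (by simpa only [← dist_eq_norm] using hselfmap) (by simpa only [← dist_eq_norm] using hcontr)

/-- Quantitative contraction step of the general anti-integrable limit theorem:
the operator `Φ` built from uniformly Lipschitz local inverses `φ_i` and `C²`-small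
couplings `u_i` maps the `2λε`-ball around the code `a` (sup metric) into itself,
is a `2λε`-contraction there, and hence has a unique fixed point (the shadowing
trajectory). -/
theorem anti_integrable_contraction
    (m : ℕ) (a : ℤ → EuclideanSpace ℝ (Fin m))
    (r ε lam : ℝ) (hr : 0 < r) (hε : 0 ≤ ε) (hlam : 0 < lam)
    (φ : ℤ → EuclideanSpace ℝ (Fin m) → EuclideanSpace ℝ (Fin m))
    (hφlip : ∀ i, LipschitzWith (Real.toNNReal lam) (φ i))
    (hφ0 : ∀ i, φ i 0 = a i)
    (u : ℤ → EuclideanSpace ℝ (Fin m) × EuclideanSpace ℝ (Fin m) → ℝ)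
    (hu : ∀ i, ContDiff ℝ 2 (u i))
    (huC2 : ∀ i z, |u i z| ≤ ε ∧ ‖fderiv ℝ (u i) z‖ ≤ ε ∧
      ‖fderiv ℝ (fderiv ℝ (u i)) z‖ ≤ ε)
    (Φ : (ℤ → EuclideanSpace ℝ (Fin m)) → ℤ → EuclideanSpace ℝ (Fin m))
    (hΦ : ∀ x i, Φ x i = φ i
      (gradient (fun z => u (i - 1) (x (i - 1), z)) (x i) +
       gradient (fun z => u i (z, x (i + 1))) (x i)))
    (hsmall1 : 2 * lam * ε < r) (hsmall2 : 2 * lam * ε < 1) :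
    (∀ x, (∀ i, ‖x i - a i‖ ≤ 2 * lam * ε) → ∀ i, ‖Φ x i - a i‖ ≤ 2 * lam * ε) ∧
    (∀ x x', (∀ i, ‖x i - a i‖ ≤ 2 * lam * ε) → (∀ i, ‖x' i - a i‖ ≤ 2 * lam * ε) →
      ∀ b : ℝ, 0 ≤ b → (∀ i, ‖x i - x' i‖ ≤ b) →
        ∀ i, ‖Φ x i - Φ x' i‖ ≤ (2 * lam * ε) * b) ∧
    (∃! xs : ℤ → EuclideanSpace ℝ (Fin m),
      (∀ i, ‖xs i - a i‖ ≤ 2 * lam * ε) ∧ ∀ i, Φ xs i = xs i) :=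
  anti_integrable_contraction_general m a ε lam hε hlam φ hφlip hφ0 u hu huC2 Φ hΦ hsmall2
end

section
/- Consider the linear recursion u_i = P_i u_{i-1} + Q_i u_i + R_i u_{i+1} in ℝ^m, where ‖P_i‖, ‖Q_i‖, ‖R_i‖ ≤ δ for all i and δ < 1/5. Then for any i, if (u_{i-1}, u_i) lies in the horizontal cone H = {(v,w) : ‖v‖ ≤ ‖w‖/2}, the pair (u_i, u_{i+1}) also lies in H, provided δ/(1 - 3δ/2) < 1/2; moreover ‖(u_i,u_{i+1})‖² ≥ 4‖(u_{i-1},u_i)‖² (Euclidean norms on ℝ^m × ℝ^m) under the same smallness condition. -/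
open Real

/-- Cone-criterion hyperbolicity estimate near the anti-integrable limit: for the
variational recursion `u_i = P_i u_{i-1} + Q_i u_i + R_i u_{i+1}` with all operator
norms `≤ δ`, `δ < 1/5` and `δ/(1 - 3δ/2) < 1/2`, the horizontal cone
`‖v‖ ≤ ‖w‖/2` is invariant and vectors in it are expanded by a factor `2`. -/
theorem anti_integrable_cone_estimate
    (m : ℕ) (δ : ℝ) (hδ0 : 0 ≤ δ) (hδ : δ < 1 / 5)
    (hδ2 : δ / (1 - 3 * δ / 2) < 1 / 2)
    (P Q R : ℤ → EuclideanSpace ℝ (Fin m) →L[ℝ] EuclideanSpace ℝ (Fin m))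
    (hP : ∀ i, ‖P i‖ ≤ δ) (hQ : ∀ i, ‖Q i‖ ≤ δ) (hR : ∀ i, ‖R i‖ ≤ δ)
    (u : ℤ → EuclideanSpace ℝ (Fin m))
    (hu : ∀ i : ℤ, u i = P i (u (i - 1)) + Q i (u i) + R i (u (i + 1))) :
    ∀ i : ℤ, ‖u (i - 1)‖ ≤ ‖u i‖ / 2 →
      ‖u i‖ ≤ ‖u (i + 1)‖ / 2 ∧
      ‖u i‖ ^ 2 + ‖u (i + 1)‖ ^ 2 ≥ 4 * (‖u (i - 1)‖ ^ 2 + ‖u i‖ ^ 2) := by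
  intro i hcone
  have ha : (0:ℝ) ≤ ‖u (i-1)‖ := norm_nonneg _
  have hb : (0:ℝ) ≤ ‖u i‖ := norm_nonneg _
  have hc : (0:ℝ) ≤ ‖u (i+1)‖ := norm_nonneg _
  have hpos : (0:ℝ) < 1 - 3 * δ / 2 := by linarith
  -- key norm inequality
  have hkey : ‖u i‖ * (1 - 3 * δ / 2) ≤ δ * ‖u (i+1)‖ := by
    have h1 : ‖u i‖ ≤ δ * ‖u (i-1)‖ + δ * ‖u i‖ + δ * ‖u (i+1)‖ := by
      calc ‖u i‖ = ‖P i (u (i-1)) + Q i (u i) + R i (u (i+1))‖ := by rw [← hu i]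
        _ ≤ ‖P i (u (i-1)) + Q i (u i)‖ + ‖R i (u (i+1))‖ := norm_add_le _ _
        _ ≤ ‖P i (u (i-1))‖ + ‖Q i (u i)‖ + ‖R i (u (i+1))‖ := by
            have := norm_add_le (P i (u (i-1))) (Q i (u i)); linarith
        _ ≤ δ * ‖u (i-1)‖ + δ * ‖u i‖ + δ * ‖u (i+1)‖ := by
            have h1 := ((P i).le_opNorm (u (i-1))).trans
              (mul_le_mul_of_nonneg_right (hP i) ha)
            have h2 := ((Q i).le_opNorm (u i)).trans
              (mul_le_mul_of_nonneg_right (hQ i) hb)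
            have h3 := ((R i).le_opNorm (u (i+1))).trans
              (mul_le_mul_of_nonneg_right (hR i) hc)
            linarith
    have h2 : δ * ‖u (i-1)‖ ≤ δ * (‖u i‖ / 2) :=
      mul_le_mul_of_nonneg_left hcone hδ0
    nlinarith
  have hstep : ‖u i‖ ≤ ‖u (i+1)‖ / 2 := by
    have h3 : ‖u i‖ ≤ δ / (1 - 3 * δ / 2) * ‖u (i+1)‖ := by
      rw [div_mul_eq_mul_div, le_div_iff₀ hpos]
      nlinarith
    have h4 : δ / (1 - 3 * δ / 2) * ‖u (i+1)‖ ≤ 1 / 2 * ‖u (i+1)‖ :=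
      mul_le_mul_of_nonneg_right (le_of_lt hδ2) hc
    linarith
  refine ⟨hstep, ?_⟩
  nlinarith [sq_nonneg (‖u i‖ - 2 * ‖u (i-1)‖)]
end

section
/- Suppose for each i ∈ ℤ we have sequences (x_i^{(j)})_{j≥0} and (x_i'^{(j)})_{j≥0} in ℝ satisfying |x_i^{(j+1)} - x_i'^{(j+1)}| ≤ c(|x_{i+1}^{(j)} - x_{i+1}'^{(j)}| + 2|x_i^{(j)} - x_i'^{(j)}| + |x_{i-1}^{(j)} - x_{i-1}'^{(j)}|) with c ≤ 1/8, that |x_k^{(0)} - x_k'^{(0)}| = 0 for |k| ≤ n, and that |x_k^{(j)} - x_k'^{(j)}| ≤ 2σ for all k, j. Then |x_k^{(j)} - x_k'^{(j)}| ≤ 5^{|k| - n} · 2σ for all |k| ≤ n and all j ≥ 0. -/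
open Real

/-- Propagation-of-smallness estimate for iterates of the anti-integrable
contraction: a three-point recursive Lipschitz bound with constant `c ≤ 1/8`,
together with agreement of the initial data on a window `|k| ≤ n` and a uniform
bound `2σ`, forces `|x_k^{(j)} - x'^{(j)}_k| ≤ 5^{|k|-n} · 2σ` on the window for
all iterates `j`. -/
theorem propagation_of_smallness
    (x x' : ℤ → ℕ → ℝ) (c σ : ℝ) (hc0 : 0 ≤ c) (hc : c ≤ 1 / 8)
    (n : ℤ) (hn : 0 ≤ n)
    (hrec : ∀ i : ℤ, ∀ j : ℕ,
      |x i (j + 1) - x' i (j + 1)| ≤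
        c * (|x (i + 1) j - x' (i + 1) j| + 2 * |x i j - x' i j| +
             |x (i - 1) j - x' (i - 1) j|))
    (hinit : ∀ k : ℤ, |k| ≤ n → |x k 0 - x' k 0| = 0)
    (hbdd : ∀ k : ℤ, ∀ j : ℕ, |x k j - x' k j| ≤ 2 * σ) :
    ∀ j : ℕ, ∀ k : ℤ, |k| ≤ n →
      |x k j - x' k j| ≤ (5 : ℝ) ^ (|k| - n) * (2 * σ) := by
  have h5 : (5:ℝ) ≠ 0 := by norm_num
  have hσ : 0 ≤ 2 * σ := le_trans (abs_nonneg _) (hbdd 0 0)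
  set θ : ℝ := c * (36/5) with hθdef
  have hθ0 : 0 ≤ θ := by positivity
  have hθ1 : θ ≤ 1 := by rw [hθdef]; nlinarith
  have key : ∀ j : ℕ, ∀ k : ℤ,
      |x k j - x' k j| ≤ 2 * σ * θ ^ j * ((5:ℝ) ^ (k - n - 1) + (5:ℝ) ^ (-k - n - 1)) := by
    intro j
    induction j with
    | zero =>
      intro k
      rcases le_or_gt |k| n with h | h
      · rw [hinit k h]
        have p1 : (0:ℝ) < (5:ℝ) ^ (k - n - 1) := by positivity
        have p2 : (0:ℝ) < (5:ℝ) ^ (-k - n - 1) := by positivity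
        nlinarith
      · have h1 : (1:ℝ) ≤ (5:ℝ) ^ (k - n - 1) + (5:ℝ) ^ (-k - n - 1) := by
          rcases le_or_gt 0 k with hk | hk
          · have : (1:ℝ) ≤ (5:ℝ) ^ (k - n - 1) := by
              apply one_le_zpow₀ (by norm_num)
              have : |k| = k := abs_of_nonneg hk
              omega
            have p2 : (0:ℝ) < (5:ℝ) ^ (-k - n - 1) := by positivity
            linarith
          · have : (1:ℝ) ≤ (5:ℝ) ^ (-k - n - 1) := by
              apply one_le_zpow₀ (by norm_num)
              have : |k| = -k := abs_of_neg hk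
              omega
            have p1 : (0:ℝ) < (5:ℝ) ^ (k - n - 1) := by positivity
            linarith
        calc |x k 0 - x' k 0| ≤ 2 * σ := hbdd k 0
          _ = 2 * σ * θ ^ 0 * 1 := by ring
          _ ≤ _ := by
            rw [pow_zero]
            nlinarith
    | succ j ih =>
      intro k
      set P : ℝ := (5:ℝ) ^ (k - n - 1) with hP
      set Q : ℝ := (5:ℝ) ^ (-k - n - 1) with hQ
      have e1 : (5:ℝ) ^ (k + 1 - n - 1) = 5 * P := by
        rw [hP, show k + 1 - n - 1 = (k - n - 1) + 1 by ring, zpow_add_one₀ h5]; ring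
      have e2 : (5:ℝ) ^ (-(k+1) - n - 1) = Q / 5 := by
        rw [hQ, show -(k+1) - n - 1 = (-k - n - 1) - 1 by ring, zpow_sub_one₀ h5]; ring
      have e3 : (5:ℝ) ^ (k - 1 - n - 1) = P / 5 := by
        rw [hP, show k - 1 - n - 1 = (k - n - 1) - 1 by ring, zpow_sub_one₀ h5]; ring
      have e4 : (5:ℝ) ^ (-(k-1) - n - 1) = 5 * Q := by
        rw [hQ, show -(k-1) - n - 1 = (-k - n - 1) + 1 by ring, zpow_add_one₀ h5]; ring
      have A := ih (k+1); rw [e1, e2] at A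
      have B := ih k
      have C := ih (k-1); rw [e3, e4] at C
      have hT : 0 ≤ 2 * σ * θ ^ j := by positivity
      calc |x k (j+1) - x' k (j+1)|
          ≤ c * (|x (k+1) j - x' (k+1) j| + 2 * |x k j - x' k j|
              + |x (k-1) j - x' (k-1) j|) := hrec k j
        _ ≤ c * (2 * σ * θ ^ j * (5 * P + Q / 5) + 2 * (2 * σ * θ ^ j * (P + Q))
              + 2 * σ * θ ^ j * (P / 5 + 5 * Q)) := by gcongr
        _ = 2 * σ * θ ^ (j+1) * (P + Q) := by rw [pow_succ, hθdef]; ring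
  intro j k hk
  have hP : (5:ℝ) ^ (k - n - 1) ≤ (5:ℝ) ^ (|k| - n - 1) := by
    apply zpow_le_zpow_right₀ (by norm_num)
    have := le_abs_self k; omega
  have hQ : (5:ℝ) ^ (-k - n - 1) ≤ (5:ℝ) ^ (|k| - n - 1) := by
    apply zpow_le_zpow_right₀ (by norm_num)
    have := neg_abs_le k; omega
  have hθj : θ ^ j ≤ 1 := pow_le_one₀ hθ0 hθ1
  have hθjn : 0 ≤ θ ^ j := by positivity
  have hstep : (5:ℝ) ^ (|k| - n - 1) = (5:ℝ) ^ (|k| - n) / 5 := by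
    rw [zpow_sub_one₀ h5]; ring
  have hpos : (0:ℝ) ≤ (5:ℝ) ^ (|k| - n) := by positivity
  calc |x k j - x' k j|
      ≤ 2 * σ * θ ^ j * ((5:ℝ) ^ (k - n - 1) + (5:ℝ) ^ (-k - n - 1)) := key j k
    _ ≤ 2 * σ * 1 * ((5:ℝ) ^ (|k| - n - 1) + (5:ℝ) ^ (|k| - n - 1)) := by
        apply mul_le_mul (by nlinarith) (by linarith) (by positivity) (by linarith)
    _ = (2/5) * ((5:ℝ) ^ (|k| - n) * (2 * σ)) := by rw [hstep]; ring
    _ ≤ (5:ℝ) ^ (|k| - n) * (2 * σ) := by nlinarith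
end
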